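/- arXiv:math/0612275 — 7 statements merged into one kernel-verified Lean document; each statement's English description precedes it below -/
import Mathlib

section
/- Let A be a finite-dimensional commutative R-algebra with nondegenerate form ⟨a,b⟩ = L(ab), let f ∈ A with f^{ℓ+1} = 0 and define K_m := Ann_A(f) ∩ (f^{m-1}) for m ≥ 1. Then the orthogonal complement of K_m with respect to ⟨ , ⟩ equals the ideal (f) + Ann_A(f^{m-1}). -/
/-!
The pairing `⟨a, b⟩ = L (a * b)` is associative, `⟨c a, b⟩ = ⟨a, c b⟩`, so the orthogonal complement
of the principal ideal `(c)` is the annihilator `Ann(c)`, and by finite-dimensional duality the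
orthogonal complement of `Ann(c)` is `(c)`. Hence `((f) + Ann(g))^⊥ = Ann(f) ∩ (g)`, and taking
complements once more with `g = f ^ (m - 1)` gives the theorem.
-/

open LinearMap
open LinearMap (BilinForm)

namespace LinearMap.BilinForm

theorem orthogonal_sup {R M : Type*} [CommSemiring R] [AddCommMonoid M] [Module R M]
    (B : BilinForm R M) (U V : Submodule R M) :
    B.orthogonal (U ⊔ V) = B.orthogonal U ⊓ B.orthogonal V := by
  refine le_antisymm (le_inf (B.orthogonal_le le_sup_left) (B.orthogonal_le le_sup_right)) ?_
  rintro a ⟨haU, haV⟩ n hn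
  obtain ⟨u, hu, v, hv, rfl⟩ := Submodule.mem_sup.mp hn
  rw [map_add, LinearMap.add_apply, haU u hu, haV v hv, add_zero]

end LinearMap.BilinForm

section MulPairing

variable {R A : Type*} [CommRing R] [CommRing A] [Algebra R A]

def mulPairing (L : A →ₗ[R] R) : BilinForm R A :=
  (mul R A).compr₂ L

@[simp]
theorem mulPairing_apply (L : A →ₗ[R] R) (a b : A) : mulPairing L a b = L (a * b) := rfl

theorem mulPairing_isSymm (L : A →ₗ[R] R) : (mulPairing L).IsSymm :=
  BilinForm.isSymm_def.mpr fun a b => by rw [mulPairing_apply, mulPairing_apply, mul_comm]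

theorem mulPairing_nondegenerate {L : A →ₗ[R] R} (hL : ∀ a : A, (∀ b : A, L (a * b) = 0) → a = 0) :
    (mulPairing L).Nondegenerate :=
  (mulPairing_isSymm L).isRefl.nondegenerate_iff_separatingLeft.mpr hL

theorem mulPairing_orthogonal_range_mulLeft {L : A →ₗ[R] R}
    (hL : ∀ a : A, (∀ b : A, L (a * b) = 0) → a = 0) (c : A) :
    (mulPairing L).orthogonal (range (mulLeft R c)) = ker (mulLeft R c) := by
  ext a
  simp only [BilinForm.mem_orthogonal_iff, mem_range, mulLeft_apply, mem_ker,
    forall_exists_index, forall_apply_eq_imp_iff, mulPairing_apply]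
  constructor
  · refine fun h => hL _ fun b => ?_
    rw [mul_right_comm]
    exact h b
  · intro hca b
    rw [mul_right_comm, hca, zero_mul, map_zero]

variable {K : Type*} [Field K] [Algebra K A] [FiniteDimensional K A]

theorem mulPairing_orthogonal_ker_mulLeft {L : A →ₗ[K] K}
    (hL : ∀ a : A, (∀ b : A, L (a * b) = 0) → a = 0) (c : A) :
    (mulPairing L).orthogonal (ker (mulLeft K c)) = range (mulLeft K c) := by
  rw [← mulPairing_orthogonal_range_mulLeft hL c]
  exact (mulPairing L).orthogonal_orthogonal (mulPairing_nondegenerate hL)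
    (mulPairing_isSymm L).isRefl _

theorem mulPairing_orthogonal_ker_mulLeft_inf_range_mulLeft {L : A →ₗ[K] K}
    (hL : ∀ a : A, (∀ b : A, L (a * b) = 0) → a = 0) (f g : A) :
    (mulPairing L).orthogonal (ker (mulLeft K f) ⊓ range (mulLeft K g)) =
      range (mulLeft K f) ⊔ ker (mulLeft K g) := by
  rw [← mulPairing_orthogonal_range_mulLeft hL f, ← mulPairing_orthogonal_ker_mulLeft hL g,
    ← BilinForm.orthogonal_sup]
  exact (mulPairing L).orthogonal_orthogonal (mulPairing_nondegenerate hL)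
    (mulPairing_isSymm L).isRefl _

end MulPairing

theorem stmt_3_general (A : Type*) [CommRing A] [Algebra ℝ A] [FiniteDimensional ℝ A]
    (L : A →ₗ[ℝ] ℝ) (hnd : ∀ a : A, (∀ b : A, L (a * b) = 0) → a = 0)
    (f : A) (m : ℕ) :
    {a : A | ∀ x : A, x * f = 0 → x ∈ Ideal.span {f ^ (m - 1)} → L (a * x) = 0} =
    {a : A | ∃ b c : A, c * f ^ (m - 1) = 0 ∧ a = b * f + c} := by
  ext a
  have key := SetLike.ext_iff.mp
    (mulPairing_orthogonal_ker_mulLeft_inf_range_mulLeft hnd f (f ^ (m - 1))) a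
  simp only [BilinForm.mem_orthogonal_iff, Submodule.mem_inf, mem_ker, mem_range,
    Submodule.mem_sup, mulLeft_apply, mulPairing_apply, Set.mem_ofPred_eq,
    Ideal.mem_span_singleton', mul_comm _ f, mul_comm _ (f ^ (m - 1)), mul_comm a, and_imp,
    forall_exists_index, exists_exists_eq_and, eq_comm (a := a)] at key ⊢
  exact key

/-- For `K_m = Ann_A(f) ∩ (f^{m-1})` in a finite-dimensional commutative ℝ-algebra with
nondegenerate form `⟨a,b⟩ = L(ab)` and `f` nilpotent (`f^{ℓ+1} = 0`), the orthogonal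
complement of `K_m` is `(f) + Ann_A(f^{m-1})`. -/
theorem stmt_3 (A : Type*) [CommRing A] [Algebra ℝ A] [FiniteDimensional ℝ A]
    (L : A →ₗ[ℝ] ℝ) (hnd : ∀ a : A, (∀ b : A, L (a * b) = 0) → a = 0)
    (f : A) (ℓ : ℕ) (hf : f ^ (ℓ + 1) = 0) (m : ℕ) (hm : 1 ≤ m) :
    {a : A | ∀ x : A, x * f = 0 → x ∈ Ideal.span {f ^ (m - 1)} → L (a * x) = 0} =
    {a : A | ∃ b c : A, c * f ^ (m - 1) = 0 ∧ a = b * f + c} :=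
  stmt_3_general A L hnd f m
end

section
/- Let A be a finite-dimensional commutative local R-algebra with one-dimensional socle generated by J, and let L : A → R be linear with L(J) > 0 so that ⟨a,b⟩ := L(ab) is nondegenerate. Let f ∈ A, f in the maximal ideal, and let K_m := Ann_A(f) ∩ (f^{m-1}). For a,a' ∈ K_m, define ⟨a,a'⟩_m := ⟨b, a'⟩ where b is any element with b·f^{m-1} = a. Then ⟨a,a'⟩_m is well defined, i.e., independent of the choice of b. -/
/-- Well-definedness of the order-`m` bilinear form `⟨a,a'⟩_m = ⟨a / f^{m-1}, a'⟩` on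
`K_m = Ann_A(f) ∩ (f^{m-1})`: the value does not depend on the chosen divisor. -/
theorem stmt_5 (A : Type*) [CommRing A] [Algebra ℝ A] [FiniteDimensional ℝ A]
    [IsLocalRing A] (J : A)
    (hsoc : ∀ a : A, (∀ x ∈ IsLocalRing.maximalIdeal A, a * x = 0) ↔ ∃ c : ℝ, a = c • J)
    (L : A →ₗ[ℝ] ℝ) (hJ : 0 < L J)
    (hnd : ∀ a : A, (∀ b : A, L (a * b) = 0) → a = 0)
    (f : A) (hfm : f ∈ IsLocalRing.maximalIdeal A)
    (m : ℕ) (hm : 1 ≤ m) (a a' b b' : A)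
    (hb : b * f ^ (m - 1) = a) (hb' : b' * f ^ (m - 1) = a)
    (ha' : a' * f = 0) (ha'2 : a' ∈ Ideal.span {f ^ (m - 1)}) :
    L (b * a') = L (b' * a') := by
  obtain ⟨c, hc⟩ := Ideal.mem_span_singleton.mp ha'2
  have : b * a' = b' * a' := by
    calc b * a' = b * f ^ (m - 1) * c := by rw [hc]; ring
    _ = b' * f ^ (m - 1) * c := by rw [hb, hb']
    _ = b' * a' := by rw [hc]; ring
  rw [this]
end

section
/- With A, f, L, K_m as above, the order-m bilinear form ⟨a,a'⟩_m := ⟨a/f^{m-1}, a'⟩ on K_m vanishes whenever a ∈ K_{m+1}: if a ∈ Ann_A(f) ∩ (f^m) and a' ∈ Ann_A(f) ∩ (f^{m-1}), then for any b with b·f^{m-1} = a one has L(b·a') = 0. -/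
/-- The order-`m` bilinear form `⟨a,a'⟩_m = ⟨a / f^{m-1}, a'⟩` on `K_m` vanishes whenever
`a ∈ K_{m+1} = Ann_A(f) ∩ (f^m)`. -/
theorem stmt_6 (A : Type*) [CommRing A] [Algebra ℝ A] [FiniteDimensional ℝ A]
    (L : A →ₗ[ℝ] ℝ) (hnd : ∀ a : A, (∀ b : A, L (a * b) = 0) → a = 0)
    (f : A) (m : ℕ) (hm : 1 ≤ m) (a a' b : A)
    (ha1 : a * f = 0) (ha2 : a ∈ Ideal.span {f ^ m})
    (ha'1 : a' * f = 0) (ha'2 : a' ∈ Ideal.span {f ^ (m - 1)})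
    (hb : b * f ^ (m - 1) = a) :
    L (b * a') = 0 := by
  obtain ⟨c, hc⟩ := Ideal.mem_span_singleton'.mp ha'2
  obtain ⟨d, hd⟩ := Ideal.mem_span_singleton'.mp ha2
  have hpow : f ^ m = f ^ (m - 1) * f := by
    conv_lhs => rw [← Nat.sub_add_cancel hm, pow_succ]
  have : b * a' = 0 := by
    calc b * a' = c * (b * f ^ (m - 1)) := by rw [← hc]; ring
    _ = c * a := by rw [hb]
    _ = d * (c * f ^ (m - 1) * f) := by rw [← hd, hpow]; ring
    _ = 0 := by rw [hc, ha'1, mul_zero]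
  rw [this, map_zero]
end

section
/- Let A be a finite-dimensional commutative local R-algebra with one-dimensional socle, L : A → R linear, L positive on a socle generator, and ⟨a,b⟩ = L(ab) nondegenerate. Let f be in the maximal ideal and K_1 := Ann_A(f), K_2 := Ann_A(f) ∩ (f). Then the restriction of ⟨ , ⟩ to K_1 × K_1 has degeneracy locus exactly K_2. In particular for a ∈ K_1 \ K_2 there exists c ∈ K_1 with a·c equal to a socle generator. -/
section Aux

variable {A : Type*} [CommRing A] [Algebra ℝ A] [FiniteDimensional ℝ A] [IsLocalRing A]

/-- In a finite-dimensional local algebra, any nonzero element multiplies into the socle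
nontrivially. -/
theorem aux_socle (J : A)
    (hsoc : ∀ a : A, (∀ x ∈ IsLocalRing.maximalIdeal A, a * x = 0) ↔ ∃ c : ℝ, a = c • J)
    (hJ0 : J ≠ 0) (x : A) (hx : x ≠ 0) :
    ∃ y : A, ∃ r : ℝ, r ≠ 0 ∧ x * y = r • J := by
  have hart : IsArtinianRing A := isArtinian_of_tower ℝ inferInstance
  obtain ⟨n, hn⟩ : IsNilpotent (IsLocalRing.maximalIdeal A) := by
    rw [← IsLocalRing.jacobson_eq_maximalIdeal (⊥ : Ideal A) bot_ne_top]
    exact IsArtinianRing.isNilpotent_jacobson_bot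
  have key : ∀ n : ℕ, ∀ x : A, x ≠ 0 →
      (∀ y ∈ (IsLocalRing.maximalIdeal A) ^ n, x * y = 0) →
      ∃ y : A, ∃ r : ℝ, r ≠ 0 ∧ x * y = r • J := by
    intro n
    induction n with
    | zero =>
      intro x hx h
      exact absurd (by simpa using h 1 (by simp)) hx
    | succ n ih =>
      intro x hx h
      by_cases hcase : ∀ z ∈ IsLocalRing.maximalIdeal A, x * z = 0
      · obtain ⟨c, hc⟩ := (hsoc x).mp hcase
        refine ⟨1, c, ?_, by simpa using hc⟩
        rintro rfl
        simp at hc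
        exact hx hc
      · push_neg at hcase
        obtain ⟨z, hz, hxz⟩ := hcase
        obtain ⟨y, r, hr, hxy⟩ := ih (x * z) hxz (fun y hy => by
          rw [mul_assoc]
          exact h (z * y) (by
            rw [pow_succ, mul_comm ((IsLocalRing.maximalIdeal A) ^ n)]
            exact Ideal.mul_mem_mul hz hy))
        exact ⟨z * y, r, hr, by rw [← mul_assoc]; exact hxy⟩
  refine key n x hx (fun y hy => ?_)
  rw [hn] at hy
  simp only [Ideal.zero_eq_bot, Ideal.mem_bot] at hy
  simp [hy]

end Aux

/-- For `K_1 = Ann_A(f)` and `K_2 = Ann_A(f) ∩ (f)` in a finite-dimensional local ℝ-algebra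
with one-dimensional socle spanned by `J`, `L J > 0`, and nondegenerate form `⟨a,b⟩ = L(ab)`,
the restriction of `⟨ , ⟩` to `K_1 × K_1` has degeneracy locus exactly `K_2`; moreover any
`a ∈ K_1 \ K_2` admits `c ∈ K_1` with `a*c` a socle generator. -/
theorem stmt_8 (A : Type*) [CommRing A] [Algebra ℝ A] [FiniteDimensional ℝ A]
    [IsLocalRing A] (J : A)
    (hsoc : ∀ a : A, (∀ x ∈ IsLocalRing.maximalIdeal A, a * x = 0) ↔ ∃ c : ℝ, a = c • J)
    (L : A →ₗ[ℝ] ℝ) (hJ : 0 < L J)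
    (hnd : ∀ a : A, (∀ b : A, L (a * b) = 0) → a = 0)
    (f : A) (hfm : f ∈ IsLocalRing.maximalIdeal A) :
    (∀ a : A, a * f = 0 →
      ((∀ b : A, b * f = 0 → L (a * b) = 0) ↔ a ∈ Ideal.span {f})) ∧
    (∀ a : A, a * f = 0 → a ∉ Ideal.span {f} →
      ∃ c : A, c * f = 0 ∧ ∃ r : ℝ, r ≠ 0 ∧ a * c = r • J) := by
  -- The pairing map Φ : A →ₗ Dual ℝ A, Φ a b = L (a * b).
  set Φ : A →ₗ[ℝ] Module.Dual ℝ A := (LinearMap.mul ℝ A).compr₂ L with hΦdef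
  have hΦ : ∀ a b : A, Φ a b = L (a * b) := fun a b => rfl
  have hΦinj : Function.Injective Φ := by
    rw [injective_iff_map_eq_zero]
    intro a ha
    exact hnd a (fun b => by rw [← hΦ, ha]; rfl)
  have hΦsurj : Function.Surjective Φ := by
    rw [← LinearMap.injective_iff_surjective_of_finrank_eq_finrank
      (Subspace.dual_finrank_eq).symm]
    exact hΦinj
  -- multiplication by f
  set μ : A →ₗ[ℝ] A := LinearMap.mulRight ℝ f with hμdef
  have hμ : ∀ x : A, μ x = x * f := fun x => rfl
  have hJ0 : J ≠ 0 := by rintro rfl; simp at hJ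
  -- Part 1
  have part1 : ∀ a : A, a * f = 0 →
      ((∀ b : A, b * f = 0 → L (a * b) = 0) ↔ a ∈ Ideal.span {f}) := by
    intro a _
    constructor
    · intro h
      -- Φ a annihilates ker μ, hence lies in range of μ.dualMap
      have hmem : Φ a ∈ (LinearMap.ker μ).dualAnnihilator := by
        rw [Submodule.mem_dualAnnihilator]
        intro b hb
        exact h b hb
      rw [← LinearMap.range_dualMap_eq_dualAnnihilator_ker] at hmem
      obtain ⟨ψ, hψ⟩ := hmem
      obtain ⟨g, rfl⟩ := hΦsurj ψ
      have : Φ a = Φ (g * f) := by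
        ext x
        rw [← hψ]
        show Φ g (x * f) = L (g * f * x)
        rw [hΦ]
        ring_nf
      have := hΦinj this
      rw [this, Ideal.mem_span_singleton]
      exact Dvd.intro_left g rfl
    · intro h b hb
      rw [Ideal.mem_span_singleton] at h
      obtain ⟨g, rfl⟩ := h
      have : f * g * b = g * (b * f) := by ring
      rw [this, hb, mul_zero, map_zero]
  refine ⟨part1, ?_⟩
  intro a haf hspan
  have : ¬ ∀ b : A, b * f = 0 → L (a * b) = 0 := fun h => hspan ((part1 a haf).mp h)
  push_neg at this
  obtain ⟨b, hbf, hLab⟩ := this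
  have hab : a * b ≠ 0 := fun h => hLab (by rw [h, map_zero])
  obtain ⟨y, r, hr, hxy⟩ := aux_socle J hsoc hJ0 (a * b) hab
  refine ⟨b * y, by rw [mul_comm b y, mul_assoc, hbf, mul_zero], r, hr, ?_⟩
  rw [← mul_assoc]
  exact hxy
end

section
/- Let A be a finite-dimensional commutative R-algebra with nondegenerate form ⟨a,b⟩ = L(ab), f nilpotent in A, and K_m := Ann_A(f) ∩ (f^{m-1}). Choosing primitive subspaces P_j for the nilpotent operator M_f as in the Jordan decomposition, the map M_f^{m-1} : P_m → K_m / K_{m+1} (composing multiplication by f^{m-1} with the quotient projection) is a well-defined linear isomorphism. -/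
/-- Given the Jordan decomposition `A = ⨁_j ⨁_{k ≤ j} f^k·(P j)` for the nilpotent
multiplication by `f` (here `P j` is the paper's `P_{j+1}`), multiplication by `f^{m-1}`
followed by the projection induces a linear isomorphism `P_m → K_m / K_{m+1}`, where
`K_m = Ann_A(f) ∩ (f^{m-1})`.  This is expressed by: the map lands in `K_m`, is injective
modulo `K_{m+1}`, and is surjective onto `K_m` modulo `K_{m+1}`. -/
theorem stmt_10 (A : Type*) [CommRing A] [Algebra ℝ A] [FiniteDimensional ℝ A]
    (L : A →ₗ[ℝ] ℝ) (hnd : ∀ a : A, (∀ b : A, L (a * b) = 0) → a = 0)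
    (f : A) (ℓ : ℕ) (hf : f ^ (ℓ + 1) = 0)
    (P : ℕ → Submodule ℝ A)
    (hP1 : ∀ j, ∀ v ∈ P j, f ^ (j + 1) * v = 0)
    (hP2 : ∀ j, ∀ v ∈ P j, f ^ j * v = 0 → v = 0)
    (hPtop : ∀ j, ℓ < j → P j = ⊥)
    (hind : iSupIndep (fun p : {q : ℕ × ℕ // q.2 ≤ q.1 ∧ q.1 ≤ ℓ} =>
      Submodule.map (LinearMap.mulLeft ℝ (f ^ p.1.2)) (P p.1.1)))
    (hsup : (⨆ p : {q : ℕ × ℕ // q.2 ≤ q.1 ∧ q.1 ≤ ℓ},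
      Submodule.map (LinearMap.mulLeft ℝ (f ^ p.1.2)) (P p.1.1)) = ⊤)
    (m : ℕ) (hm : 1 ≤ m) :
    (∀ v ∈ P (m - 1), (f ^ (m - 1) * v) * f = 0 ∧
        f ^ (m - 1) * v ∈ Ideal.span {f ^ (m - 1)}) ∧
    (∀ v ∈ P (m - 1), f ^ (m - 1) * v ∈ Ideal.span {f ^ m} → v = 0) ∧
    (∀ a : A, a * f = 0 → a ∈ Ideal.span {f ^ (m - 1)} →
      ∃ v ∈ P (m - 1), a - f ^ (m - 1) * v ∈ Ideal.span {f ^ m} ∧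
        (a - f ^ (m - 1) * v) * f = 0) := by
  classical
  obtain ⟨n, rfl⟩ : ∃ n, m = n + 1 := ⟨m - 1, (Nat.succ_pred_eq_of_pos hm).symm⟩
  simp only [Nat.add_sub_cancel]
  set ι := {q : ℕ × ℕ // q.2 ≤ q.1 ∧ q.1 ≤ ℓ} with hι
  set S : ι → Submodule ℝ A :=
    fun p => Submodule.map (LinearMap.mulLeft ℝ (f ^ p.1.2)) (P p.1.1) with hSdef
  have hind' : iSupIndep S := hind
  have hsup' : (⨆ i, S i) = ⊤ := hsup
  -- basic facts
  have fact0 : ∀ (j k : ℕ) (v : A), v ∈ P j → j + 1 ≤ k → f ^ k * v = 0 := by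
    intro j k v hv hk
    have hpow : f ^ k = f ^ (k - (j + 1)) * f ^ (j + 1) := by
      rw [← pow_add]; congr 1; omega
    rw [hpow, mul_assoc, hP1 j v hv, mul_zero]
  have fact_inj : ∀ (j k : ℕ) (v : A), v ∈ P j → k ≤ j → f ^ k * v = 0 → v = 0 := by
    intro j k v hv hk h0
    apply hP2 j v hv
    have hpow : f ^ j = f ^ (j - k) * f ^ k := by rw [← pow_add]; congr 1; omega
    rw [hpow, mul_assoc, h0, mul_zero]
  have decomp : ∀ c : A, ∃ g : ι →₀ A, (∀ i, g i ∈ S i) ∧ (g.sum fun _ x => x) = c := by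
    intro c
    have hc : c ∈ ⨆ i, S i := by rw [hsup']; trivial
    exact (Submodule.mem_iSup_iff_exists_finsupp S c).mp hc
  -- key: f^t · A lands in the span of components with second index ≥ t
  have key : ∀ (t : ℕ) (c : A), f ^ t * c ∈ ⨆ (i : ι) (_ : t ≤ i.1.2), S i := by
    intro t c
    obtain ⟨g, hg, hgsum⟩ := decomp c
    rw [← hgsum, Finsupp.sum, Finset.mul_sum]
    refine Submodule.sum_mem _ fun i _ => ?_
    obtain ⟨p, hp, hpe⟩ := hg i
    have hpe' : f ^ i.1.2 * p = g i := hpe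
    by_cases hcase : i.1.1 + 1 ≤ t + i.1.2
    · have hz : f ^ t * g i = 0 := by
        rw [← hpe', ← mul_assoc, ← pow_add]
        exact fact0 _ _ _ hp hcase
      rw [hz]; exact Submodule.zero_mem _
    · have hle : t + i.1.2 ≤ i.1.1 := by omega
      refine Submodule.mem_iSup_of_mem ⟨(i.1.1, t + i.1.2), hle, i.2.2⟩ ?_
      refine Submodule.mem_iSup_of_mem (Nat.le_add_right t i.1.2) ?_
      exact ⟨p, hp, by rw [LinearMap.mulLeft_apply, ← hpe', ← mul_assoc, ← pow_add]⟩
  -- part 1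
  refine ⟨fun v hv => ⟨?_, ?_⟩, ?_, ?_⟩
  · have h1 : (f ^ n * v) * f = f ^ (n + 1) * v := by ring
    rw [h1, hP1 n v hv]
  · exact Ideal.mem_span_singleton.2 (dvd_mul_right _ _)
  -- part 2: injectivity
  · intro v hv hmem
    by_cases hn : ℓ < n
    · have hbot := hPtop n hn; rw [hbot] at hv; simpa using hv
    push_neg at hn
    obtain ⟨c, hc⟩ := Ideal.mem_span_singleton'.mp hmem
    have h1 : f ^ n * v ∈ S ⟨(n, n), le_refl n, hn⟩ :=
      ⟨v, hv, LinearMap.mulLeft_apply _ _ _⟩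
    have h2 : f ^ n * v ∈ ⨆ (i : ι) (_ : i ≠ (⟨(n, n), le_refl n, hn⟩ : ι)), S i := by
      have hmono : (⨆ (i : ι) (_ : n + 1 ≤ i.1.2), S i) ≤
          ⨆ (i : ι) (_ : i ≠ (⟨(n, n), le_refl n, hn⟩ : ι)), S i := by
        refine iSup_mono fun i => iSup_le fun hi => ?_
        refine le_iSup (fun _ : i ≠ (⟨(n, n), le_refl n, hn⟩ : ι) => S i) ?_
        rintro rfl
        exact Nat.not_succ_le_self n hi
      have hxc : f ^ n * v = f ^ (n + 1) * c := by rw [← hc]; ring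
      rw [hxc]
      exact hmono (key (n + 1) c)
    have h0 : f ^ n * v = 0 :=
      Submodule.disjoint_def.mp (hind' ⟨(n, n), le_refl n, hn⟩) _ h1 h2
    exact hP2 n v hv h0
  -- part 3: surjectivity
  · intro a haf hamem
    by_cases hn : ℓ < n
    · refine ⟨0, Submodule.zero_mem _, ?_, ?_⟩
      · have hfn : f ^ n = 0 := by
          have hpow : f ^ n = f ^ (n - (ℓ + 1)) * f ^ (ℓ + 1) := by
            rw [← pow_add]; congr 1; omega
          rw [hpow, hf, mul_zero]
        obtain ⟨b, hb⟩ := Ideal.mem_span_singleton'.mp hamem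
        have ha0 : a = 0 := by rw [← hb, hfn, mul_zero]
        simp [ha0]
      · simp [haf]
    push_neg at hn
    obtain ⟨b, hb⟩ := Ideal.mem_span_singleton'.mp hamem
    obtain ⟨g, hg, hgsum⟩ := decomp b
    choose p hp1 hp2 using hg
    simp only [LinearMap.mulLeft_apply] at hp2
    have hzero : ∀ i : ι, g i = 0 → p i = 0 := fun i h =>
      fact_inj _ _ _ (hp1 i) i.2.1 (by rw [hp2 i, h])
    -- the big sum equation
    have hsum0 : ∑ i ∈ g.support, f ^ (n + 1) * g i = 0 := by
      have h1 : f ^ (n + 1) * b = ∑ i ∈ g.support, f ^ (n + 1) * g i := by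
        rw [← hgsum, Finsupp.sum, Finset.mul_sum]
      have h2 : f ^ (n + 1) * b = a * f := by rw [← hb]; ring
      rw [← h1, h2, haf]
    -- claim C : components with n+1+k ≤ j vanish
    have claimC : ∀ i1 : ι, n + 1 + i1.1.2 ≤ i1.1.1 → p i1 = 0 := by
      intro i1 hle1
      by_cases hsupp : i1 ∈ g.support
      · have hx1 : f ^ (n + 1) * g i1 ∈
            S ⟨(i1.1.1, n + 1 + i1.1.2), hle1, i1.2.2⟩ :=
          ⟨p i1, hp1 i1, by
            rw [LinearMap.mulLeft_apply, ← hp2 i1, ← mul_assoc, ← pow_add]⟩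
        have hx2 : f ^ (n + 1) * g i1 ∈ ⨆ (i' : ι)
            (_ : i' ≠ (⟨(i1.1.1, n + 1 + i1.1.2), hle1, i1.2.2⟩ : ι)), S i' := by
          have hsplit : ∑ i ∈ g.support.erase i1, f ^ (n + 1) * g i
              = -(f ^ (n + 1) * g i1) := by
            rw [Finset.sum_erase_eq_sub hsupp, hsum0, zero_sub]
          have hsplit' : f ^ (n + 1) * g i1 =
              -∑ i ∈ g.support.erase i1, f ^ (n + 1) * g i := by
            rw [hsplit, neg_neg]
          rw [hsplit']
          refine neg_mem (Submodule.sum_mem _ fun i hi => ?_)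
          by_cases hcase : i.1.1 + 1 ≤ n + 1 + i.1.2
          · have hz : f ^ (n + 1) * g i = 0 := by
              rw [← hp2 i, ← mul_assoc, ← pow_add]
              exact fact0 _ _ _ (hp1 i) hcase
            rw [hz]; exact Submodule.zero_mem _
          · have hle' : n + 1 + i.1.2 ≤ i.1.1 := by omega
            have hne : (⟨(i.1.1, n + 1 + i.1.2), hle', i.2.2⟩ : ι) ≠
                (⟨(i1.1.1, n + 1 + i1.1.2), hle1, i1.2.2⟩ : ι) := by
              intro he
              simp only [Subtype.mk.injEq, Prod.mk.injEq] at he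
              apply Finset.ne_of_mem_erase hi
              exact Subtype.ext (Prod.ext_iff.mpr ⟨he.1, by omega⟩)
            refine Submodule.mem_iSup_of_mem ⟨(i.1.1, n + 1 + i.1.2), hle', i.2.2⟩ ?_
            refine Submodule.mem_iSup_of_mem hne ?_
            exact ⟨p i, hp1 i, by
              rw [LinearMap.mulLeft_apply, ← hp2 i, ← mul_assoc, ← pow_add]⟩
        have h0 : f ^ (n + 1) * g i1 = 0 :=
          Submodule.disjoint_def.mp
            (hind' ⟨(i1.1.1, n + 1 + i1.1.2), hle1, i1.2.2⟩) _ hx1 hx2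
        refine fact_inj i1.1.1 (n + 1 + i1.1.2) _ (hp1 i1) hle1 ?_
        rw [pow_add, mul_assoc, hp2 i1]
        exact h0
      · exact hzero i1 (Finsupp.notMem_support_iff.mp hsupp)
    -- construct v
    set i0 : ι := ⟨(n, 0), Nat.zero_le n, hn⟩ with hi0
    refine ⟨p i0, hp1 i0, ?_, ?_⟩
    · -- a - f^n · p i0 ∈ (f^(n+1))
      have hdiff : a - f ^ n * p i0 = ∑ i ∈ g.support.erase i0, f ^ n * g i := by
        have ha : a = ∑ i ∈ g.support, f ^ n * g i := by
          rw [← hb, ← hgsum, Finsupp.sum, Finset.sum_mul]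
          exact Finset.sum_congr rfl fun i _ => mul_comm _ _
        by_cases hsupp : i0 ∈ g.support
        · have hp2' : f ^ 0 * p i0 = g i0 := hp2 i0
          rw [pow_zero, one_mul] at hp2'
          rw [Finset.sum_erase_eq_sub hsupp, ha, hp2']
        · have hp0 : p i0 = 0 := hzero i0 (Finsupp.notMem_support_iff.mp hsupp)
          rw [hp0, mul_zero, sub_zero, ha, Finset.erase_eq_of_notMem hsupp]
      rw [hdiff]
      refine Submodule.sum_mem _ fun i hi => ?_
      rcases Nat.eq_zero_or_pos i.1.2 with hk | hk
      · -- k = 0 : j ≠ n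
        have hjne : i.1.1 ≠ n := by
          intro hj
          exact Finset.ne_of_mem_erase hi (Subtype.ext (Prod.ext_iff.mpr ⟨hj, hk⟩))
        rcases lt_or_gt_of_ne hjne with hjlt | hjgt
        · have hz : f ^ n * g i = 0 := by
            rw [← hp2 i, ← mul_assoc, ← pow_add]
            exact fact0 _ _ _ (hp1 i) (by omega)
          rw [hz]; exact Submodule.zero_mem _
        · have hpz : p i = 0 := claimC i (by omega)
          have hz : f ^ n * g i = 0 := by rw [← hp2 i, hpz, mul_zero, mul_zero]
          rw [hz]; exact Submodule.zero_mem _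
      · -- k ≥ 1 : divisible by f^(n+1)
        refine Ideal.mem_span_singleton.2 ⟨f ^ (i.1.2 - 1) * p i, ?_⟩
        rw [← hp2 i, ← mul_assoc, ← pow_add, ← mul_assoc, ← pow_add]
        congr 2
        omega
    · have hend : (a - f ^ n * p i0) * f = a * f - f ^ (n + 1) * p i0 := by ring
      rw [hend, haf, hP1 n (p i0) (hp1 i0), sub_zero]
end

section
/- In the setting above, the bilinear pairing on primitive vectors ⟨a,b⟩^prim_m := L(f^{m-1}·a·b) on P_m × P_m is symmetric, and it is nondegenerate on P_m; it equals the pullback under the isomorphism M_f^{m-1} : P_m → K_m/K_{m+1} of the induced order-m form on K_m/K_{m+1}. -/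
/-!
For the nondegenerate form `B x y = L (x * y)`, multiplication by `f` is self-adjoint, so a
dimension count shows that the `B`-orthogonal of `ker f^(n+1)` is `f^(n+1) A`. If `a ∈ P n` pairs to zero
with `P n` under `L (f^n * · * ·)`, then `u = f^n a` is `B`-orthogonal to every Jordan piece
`f^k P j` inside `ker f^(n+1)`: for `k ≥ 1` because `f^(n+1) a = 0`, for `j < n` because
`f^n P j = 0`, and for `j = n` by hypothesis. Hence `u ∈ f^(n+1) A`, which meets the piece
`f^n P n` only in `0` by independence of the decomposition; so `u = 0` and `a = 0` by primitivity.
-/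

open LinearMap Submodule

section JordanDecomposition

variable {R A : Type*} [CommRing R] [Ring A] [Algebra R A] (f : A) (P : ℕ → Submodule R A)

abbrev JordanIndex (ℓ : ℕ) := {q : ℕ × ℕ // q.2 ≤ q.1 ∧ q.1 ≤ ℓ}

/-- `jordanPiece f P (j, k) = f^k P_j`; here `P j` is the paper's `P_{j+1}`, the primitive
vectors of the Jordan chains of length `j + 1`. -/
def jordanPiece (q : ℕ × ℕ) : Submodule R A := (P q.1).map (mulLeft R (f ^ q.2))

variable {f P} {ℓ : ℕ}

theorem pow_mul_eq_zero_of_lt (hP1 : ∀ j, ∀ v ∈ P j, f ^ (j + 1) * v = 0) {j n : ℕ} (hjn : j < n)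
    {v : A} (hv : v ∈ P j) : f ^ n * v = 0 := by
  rw [show n = n - (j + 1) + (j + 1) by omega, pow_add, mul_assoc, hP1 j v hv, mul_zero]

theorem pow_mul_mem_jordanPiece_shift (hP1 : ∀ j, ∀ v ∈ P j, f ^ (j + 1) * v = 0)
    {p : JordanIndex ℓ} {x : A} (hx : x ∈ jordanPiece f P p.1) (r : ℕ) :
    f ^ r * x ∈ ⨆ (q : JordanIndex ℓ) (_ : q.1 = (p.1.1, p.1.2 + r)), jordanPiece f P q.1 := by
  obtain ⟨⟨j, k⟩, _, hjℓ⟩ := p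
  obtain ⟨v, hv, rfl⟩ := hx
  have hx : f ^ r * (f ^ k * v) = f ^ (k + r) * v := by rw [← mul_assoc, ← pow_add, add_comm]
  rw [mulLeft_apply, hx]
  by_cases h : k + r ≤ j
  · exact mem_iSup_of_mem ⟨(j, k + r), h, hjℓ⟩ (mem_iSup_of_mem rfl ⟨v, hv, rfl⟩)
  · rw [pow_mul_eq_zero_of_lt hP1 (not_le.1 h) hv]
    exact zero_mem _

theorem eq_zero_of_pow_mul_jordanPiece_eq_zero (hP2 : ∀ j, ∀ v ∈ P j, f ^ j * v = 0 → v = 0)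
    {p : ℕ × ℕ} {r : ℕ} (hp : p.2 + r ≤ p.1) {x : A} (hx : x ∈ jordanPiece f P p)
    (hfx : f ^ r * x = 0) : x = 0 := by
  obtain ⟨v, hv, rfl⟩ := hx
  rw [mulLeft_apply] at hfx
  have hv0 : f ^ p.1 * v = 0 := by
    rw [show p.1 = (p.1 - (p.2 + r)) + r + p.2 by omega, pow_add, pow_add, mul_assoc, mul_assoc,
      hfx, mul_zero]
  rw [hP2 p.1 v hv hv0, map_zero]

theorem range_mulLeft_pow_le (hP1 : ∀ j, ∀ v ∈ P j, f ^ (j + 1) * v = 0)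
    (hsup : ⨆ q : JordanIndex ℓ, jordanPiece f P q.1 = ⊤) (r : ℕ) :
    range (mulLeft R (f ^ r)) ≤ ⨆ (q : JordanIndex ℓ) (_ : r ≤ q.1.2), jordanPiece f P q.1 := by
  rw [← Submodule.map_top, ← hsup, Submodule.map_iSup]
  refine iSup_le fun p => map_le_iff_le_comap.2 fun x hx => ?_
  have hle : (⨆ (q : JordanIndex ℓ) (_ : q.1 = (p.1.1, p.1.2 + r)), jordanPiece f P q.1) ≤
      ⨆ (q : JordanIndex ℓ) (_ : r ≤ q.1.2), jordanPiece f P q.1 :=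
    biSup_mono fun q hq => hq ▸ Nat.le_add_left r _
  exact hle (pow_mul_mem_jordanPiece_shift hP1 hx r)

theorem ker_mulLeft_pow_le (hP1 : ∀ j, ∀ v ∈ P j, f ^ (j + 1) * v = 0)
    (hP2 : ∀ j, ∀ v ∈ P j, f ^ j * v = 0 → v = 0)
    (hind : iSupIndep fun q : JordanIndex ℓ => jordanPiece f P q.1)
    (hsup : ⨆ q : JordanIndex ℓ, jordanPiece f P q.1 = ⊤) (r : ℕ) :
    ker (mulLeft R (f ^ r)) ≤
      ⨆ (q : JordanIndex ℓ) (_ : q.1.1 < q.1.2 + r), jordanPiece f P q.1 := by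
  intro x hx
  obtain ⟨c, hc, rfl⟩ := (mem_iSup_iff_exists_finsupp _ x).1 (hsup ▸ mem_top)
  refine sum_mem fun p hp => ?_
  by_cases hpr : p.1.1 < p.1.2 + r
  · exact mem_iSup_of_mem p (mem_iSup_of_mem hpr (hc p))
  suffices f ^ r * c p = 0 by
    rw [eq_zero_of_pow_mul_jordanPiece_eq_zero hP2 (not_lt.1 hpr) (hc p) this]
    exact zero_mem _
  -- `f^r` maps the piece `(j, k)` into the piece `(j, k + r)` or to `0`, injectively in `(j, k)`
  set s₀ : ℕ × ℕ := (p.1.1, p.1.2 + r)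
  have hdisj := hind.disjoint_biSup_biSup (s := {q : JordanIndex ℓ | q.1 = s₀})
    (t := {q | q.1 ≠ s₀}) (Set.disjoint_left.2 fun _ hq hq' => hq' hq)
  refine disjoint_def.1 hdisj _ (pow_mul_mem_jordanPiece_shift hP1 (hc p) r) ?_
  have hsum : f ^ r * c p = -∑ q ∈ c.support.erase p, f ^ r * c q := by
    rw [eq_neg_iff_add_eq_zero, Finset.add_sum_erase _ (fun q => f ^ r * c q) hp,
      ← Finset.mul_sum]
    exact hx
  rw [hsum]
  refine neg_mem (sum_mem fun q hq => ?_)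
  have hle : (⨆ (q' : JordanIndex ℓ) (_ : q'.1 = (q.1.1, q.1.2 + r)), jordanPiece f P q'.1) ≤
      ⨆ q' ∈ {q' : JordanIndex ℓ | q'.1 ≠ s₀}, jordanPiece f P q'.1 := by
    refine biSup_mono fun q' (hq' : q'.1 = _) => ?_
    simp only [Set.mem_ofPred_eq, hq', s₀, ne_eq, Prod.mk.injEq, add_left_inj]
    exact fun h => Finset.ne_of_mem_erase hq (Subtype.ext (Prod.ext h.1 h.2))
  exact hle (pow_mul_mem_jordanPiece_shift hP1 (hc q) r)

end JordanDecomposition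

section TraceForm

variable {𝕜 A : Type*} [Field 𝕜] [CommRing A] [Algebra 𝕜 A] [FiniteDimensional 𝕜 A]

theorem mem_range_mulLeft_of_forall_ker (L : A →ₗ[𝕜] 𝕜)
    (hnd : ∀ a : A, (∀ b : A, L (a * b) = 0) → a = 0) {g y : A}
    (hy : ∀ x, g * x = 0 → L (y * x) = 0) : y ∈ range (mulLeft 𝕜 g) := by
  let B : LinearMap.BilinForm 𝕜 A := (mul 𝕜 A).compr₂ L
  have hB : B.Nondegenerate :=
    ⟨fun x hx => hnd x hx, fun x hx => hnd x fun b => by rw [mul_comm]; exact hx b⟩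
  have hle : range (mulLeft 𝕜 g) ≤ B.orthogonal (ker (mulLeft 𝕜 g)) := by
    rintro _ ⟨z, rfl⟩ x (hx : g * x = 0)
    change L (x * (g * z)) = 0
    rw [mul_left_comm, ← mul_assoc, hx, zero_mul, map_zero]
  have hrange : range (mulLeft 𝕜 g) = B.orthogonal (ker (mulLeft 𝕜 g)) := by
    refine eq_of_le_of_finrank_le hle ?_
    rw [LinearMap.BilinForm.finrank_orthogonal hB, ← finrank_range_add_finrank_ker (mulLeft 𝕜 g)]
    omega
  rw [hrange]
  intro x hx
  change L (x * y) = 0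
  rw [mul_comm]
  exact hy x hx

theorem eq_zero_of_primitive_pairing_eq_zero (L : A →ₗ[𝕜] 𝕜)
    (hnd : ∀ a : A, (∀ b : A, L (a * b) = 0) → a = 0) {f : A} {P : ℕ → Submodule 𝕜 A} {ℓ : ℕ}
    (hP1 : ∀ j, ∀ v ∈ P j, f ^ (j + 1) * v = 0)
    (hP2 : ∀ j, ∀ v ∈ P j, f ^ j * v = 0 → v = 0)
    (hind : iSupIndep fun q : JordanIndex ℓ => jordanPiece f P q.1)
    (hsup : ⨆ q : JordanIndex ℓ, jordanPiece f P q.1 = ⊤) {n : ℕ} {a : A} (ha : a ∈ P n)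
    (hperp : ∀ b ∈ P n, L (f ^ n * a * b) = 0) : a = 0 := by
  refine hP2 n a ha ?_
  have horth : ∀ x, f ^ (n + 1) * x = 0 → L (f ^ n * a * x) = 0 := by
    intro x hx
    have hpieces : (⨆ (q : JordanIndex ℓ) (_ : q.1.1 < q.1.2 + (n + 1)), jordanPiece f P q.1) ≤
        ker (L ∘ₗ mulLeft 𝕜 (f ^ n * a)) := by
      refine iSup₂_le fun ⟨⟨j, k⟩, _⟩ hjk => ?_
      rintro _ ⟨v, hv, rfl⟩
      replace hjk : j < k + (n + 1) := hjk
      change L (f ^ n * a * (f ^ k * v)) = 0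
      rcases k with _ | k
      · rw [pow_zero, one_mul]
        rcases (by omega : j < n ∨ j = n) with hj | rfl
        · rw [mul_right_comm, pow_mul_eq_zero_of_lt hP1 hj hv, zero_mul, map_zero]
        · exact hperp v hv
      · rw [show f ^ n * a * (f ^ (k + 1) * v) = f ^ (n + 1) * a * (f ^ k * v) by ring,
          hP1 n a ha, zero_mul, map_zero]
    exact hpieces (ker_mulLeft_pow_le hP1 hP2 hind hsup (n + 1) hx)
  have hu := range_mulLeft_pow_le hP1 hsup (n + 1) (mem_range_mulLeft_of_forall_ker L hnd horth)
  by_cases hnℓ : n ≤ ℓ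
  · have hle : (⨆ (q : JordanIndex ℓ) (_ : n + 1 ≤ q.1.2), jordanPiece f P q.1) ≤
        ⨆ (q : JordanIndex ℓ) (_ : q ≠ ⟨(n, n), le_rfl, hnℓ⟩), jordanPiece f P q.1 :=
      biSup_mono fun q hq h => by rw [h] at hq; exact Nat.not_succ_le_self n hq
    exact disjoint_def.1 (hind ⟨(n, n), le_rfl, hnℓ⟩) _ ⟨a, ha, rfl⟩ (hle hu)
  · have hbot : (⨆ (q : JordanIndex ℓ) (_ : n + 1 ≤ q.1.2), jordanPiece f P q.1) = ⊥ :=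
      iSup₂_eq_bot.2 fun q hq => absurd (q.2.1.trans q.2.2) (by omega)
    rw [hbot] at hu
    exact (mem_bot 𝕜).1 hu

end TraceForm

theorem stmt_11_general (A : Type*) [CommRing A] [Algebra ℝ A] [FiniteDimensional ℝ A]
    (L : A →ₗ[ℝ] ℝ) (hnd : ∀ a : A, (∀ b : A, L (a * b) = 0) → a = 0)
    (f : A) (ℓ : ℕ)
    (P : ℕ → Submodule ℝ A)
    (hP1 : ∀ j, ∀ v ∈ P j, f ^ (j + 1) * v = 0)
    (hP2 : ∀ j, ∀ v ∈ P j, f ^ j * v = 0 → v = 0)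
    (hind : iSupIndep (fun p : {q : ℕ × ℕ // q.2 ≤ q.1 ∧ q.1 ≤ ℓ} =>
      Submodule.map (LinearMap.mulLeft ℝ (f ^ p.1.2)) (P p.1.1)))
    (hsup : (⨆ p : {q : ℕ × ℕ // q.2 ≤ q.1 ∧ q.1 ≤ ℓ},
      Submodule.map (LinearMap.mulLeft ℝ (f ^ p.1.2)) (P p.1.1)) = ⊤)
    (m : ℕ) :
    (∀ a ∈ P (m - 1), ∀ b ∈ P (m - 1),
      L (f ^ (m - 1) * a * b) = L (f ^ (m - 1) * b * a)) ∧
    (∀ a ∈ P (m - 1), (∀ b ∈ P (m - 1), L (f ^ (m - 1) * a * b) = 0) → a = 0) ∧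
    (∀ a ∈ P (m - 1), ∀ b ∈ P (m - 1), ∀ c : A,
      c * f ^ (m - 1) = f ^ (m - 1) * a →
      L (c * (f ^ (m - 1) * b)) = L (f ^ (m - 1) * a * b)) :=
  ⟨fun a _ b _ => by rw [mul_right_comm],
    fun _ ha => eq_zero_of_primitive_pairing_eq_zero L hnd hP1 hP2 hind hsup ha,
    fun a _ b _ c hc => by rw [← mul_assoc, hc]⟩

/-- The primitive pairing `⟨a,b⟩^prim_m = L (f^{m-1}·a·b)` on the primitive subspace `P_m`
(with `P j` here the paper's `P_{j+1}`) is symmetric and nondegenerate, and it is the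
pullback under `v ↦ f^{m-1}·v` of the order-`m` form `⟨a,a'⟩_m = L ((a / f^{m-1})·a')`
on `K_m / K_{m+1}`. -/
theorem stmt_11 (A : Type*) [CommRing A] [Algebra ℝ A] [FiniteDimensional ℝ A]
    (L : A →ₗ[ℝ] ℝ) (hnd : ∀ a : A, (∀ b : A, L (a * b) = 0) → a = 0)
    (f : A) (ℓ : ℕ) (hf : f ^ (ℓ + 1) = 0)
    (P : ℕ → Submodule ℝ A)
    (hP1 : ∀ j, ∀ v ∈ P j, f ^ (j + 1) * v = 0)
    (hP2 : ∀ j, ∀ v ∈ P j, f ^ j * v = 0 → v = 0)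
    (hPtop : ∀ j, ℓ < j → P j = ⊥)
    (hind : iSupIndep (fun p : {q : ℕ × ℕ // q.2 ≤ q.1 ∧ q.1 ≤ ℓ} =>
      Submodule.map (LinearMap.mulLeft ℝ (f ^ p.1.2)) (P p.1.1)))
    (hsup : (⨆ p : {q : ℕ × ℕ // q.2 ≤ q.1 ∧ q.1 ≤ ℓ},
      Submodule.map (LinearMap.mulLeft ℝ (f ^ p.1.2)) (P p.1.1)) = ⊤)
    (m : ℕ) (hm : 1 ≤ m) :
    (∀ a ∈ P (m - 1), ∀ b ∈ P (m - 1),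
      L (f ^ (m - 1) * a * b) = L (f ^ (m - 1) * b * a)) ∧
    (∀ a ∈ P (m - 1), (∀ b ∈ P (m - 1), L (f ^ (m - 1) * a * b) = 0) → a = 0) ∧
    (∀ a ∈ P (m - 1), ∀ b ∈ P (m - 1), ∀ c : A,
      c * f ^ (m - 1) = f ^ (m - 1) * a →
      L (c * (f ^ (m - 1) * b)) = L (f ^ (m - 1) * a * b)) :=
  stmt_11_general A L hnd f ℓ P hP1 hP2 hind hsup m
end

section
/- Let B be an integral domain and f, f₁ nonzero elements of B. The map Φ(b) := (b·f₁)/f (defined on the quotient ideal (f : f₁) with values in the fraction field) maps (f^m : f₁) bijectively onto (f₁ : f) ∩ (f^{m-1}) for every m ≥ 1, and maps the ideal (f^m) onto (f^{m-1}·f₁). -/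
/-- In an integral domain `B` with `f, f₁ ≠ 0`, the map `Φ(b) = b·f₁/f` (characterized by
`f·Φ(b) = f₁·b`) maps `(f^m : f₁)` bijectively onto `(f₁ : f) ∩ (f^{m-1})` for `m ≥ 1`,
and maps `(f^m)` onto `(f^{m-1}·f₁)`. -/
theorem stmt_13 (B : Type*) [CommRing B] [IsDomain B] (f f₁ : B)
    (hf : f ≠ 0) (hf₁ : f₁ ≠ 0) (m : ℕ) (hm : 1 ≤ m) :
    (∀ b c : B, f * c = f₁ * b →
      (f₁ * b ∈ Ideal.span {f ^ m} ↔
        (f * c ∈ Ideal.span {f₁} ∧ c ∈ Ideal.span {f ^ (m - 1)}))) ∧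
    (∀ c : B, f * c ∈ Ideal.span {f₁} → c ∈ Ideal.span {f ^ (m - 1)} →
      ∃ b : B, f₁ * b ∈ Ideal.span {f ^ m} ∧ f * c = f₁ * b) ∧
    (∀ b b' c : B, f * c = f₁ * b → f * c = f₁ * b' → b = b') ∧
    (∀ b c : B, f * c = f₁ * b →
      (b ∈ Ideal.span {f ^ m} ↔ c ∈ Ideal.span {f ^ (m - 1) * f₁})) := by
  obtain ⟨k, rfl⟩ := Nat.exists_eq_add_of_le hm
  simp only [Nat.add_sub_cancel_left, Ideal.mem_span_singleton, Nat.add_comm 1 k]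
  refine ⟨?_, ?_, ?_, ?_⟩
  · intro b c h
    constructor
    · rintro ⟨e, he⟩
      refine ⟨⟨b, h⟩, e, ?_⟩
      apply mul_left_cancel₀ hf
      rw [h, he, pow_succ]
      (try simp only [Nat.add_sub_cancel_left, Nat.add_sub_cancel]); ring
    · rintro ⟨_, e, he⟩
      exact ⟨e, by rw [← h, he, pow_succ]; (try simp only [Nat.add_sub_cancel_left, Nat.add_sub_cancel]); ring⟩
  · rintro c ⟨a, ha⟩ ⟨d, hd⟩
    exact ⟨a, ⟨d, by rw [← ha, hd, pow_succ]; (try simp only [Nat.add_sub_cancel_left, Nat.add_sub_cancel]); ring⟩, ha⟩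
  · intro b b' c h h'
    exact mul_left_cancel₀ hf₁ (h ▸ h')
  · intro b c h
    constructor
    · rintro ⟨e, he⟩
      refine ⟨e, mul_left_cancel₀ hf ?_⟩
      rw [h, he, pow_succ]; (try simp only [Nat.add_sub_cancel_left, Nat.add_sub_cancel]); ring
    · rintro ⟨e, he⟩
      refine ⟨e, mul_left_cancel₀ hf₁ ?_⟩
      rw [← h, he, pow_succ]; (try simp only [Nat.add_sub_cancel_left, Nat.add_sub_cancel]); ring
end
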